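/- arXiv:1402.1230 — 6 statements merged into one kernel-verified Lean document; each statement's English description precedes it below -/
import Mathlib

section
/- Let H(z,t) = 1 − t(z_1⋯z_d)S(z) where S(z) is the characteristic polynomial of a step set S ⊆ {−1,0,1}^d \ {0} symmetric about every axis. Write S(z) = (z_k + z_k^{−1}) S_1^{(k)}(z_{\hat{k}}) + S_0^{(k)}(z_{\hat{k}}) where z_{\hat{k}} omits z_k. Then a point (z, t) on the variety H = 0 satisfies the critical point equations H = 0, t H_t = z_1 H_{z_1}, …, t H_t = z_d H_{z_d} if and only if for every k, either z_k = ±1 or the polynomial (z_1⋯z_{k−1} z_{k+1}⋯z_d) S_1^{(k)}(z_{\hat{k}}) vanishes at z. -/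
/-- The polynomial `(z₁⋯z_d)·S(z) = ∑_{s ∈ S} ∏_k z_k^{s_k+1}`. -/
noncomputable def kerPoly (d : ℕ) (S : Finset (Fin d → ℤ)) (z : Fin d → ℂ) : ℂ :=
  ∑ s ∈ S, ∏ k, z k ^ (s k + 1).toNat

/-- `H(z,t) = 1 - t(z₁⋯z_d)S(z)`. -/
noncomputable def Hker (d : ℕ) (S : Finset (Fin d → ℤ)) (z : Fin d → ℂ) (t : ℂ) : ℂ :=
  1 - t * kerPoly d S z

/-- The polynomial `(z₁⋯z_{k-1}z_{k+1}⋯z_d)·S₁^{(k)}(z_{k̂}) = ∑_{s ∈ S, s_k = 1} ∏_{j ≠ k} z_j^{s_j+1}`,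
the inventory of the steps of `S` moving forward in coordinate `k`. -/
noncomputable def Qker (d : ℕ) (S : Finset (Fin d → ℤ)) (k : Fin d) (z : Fin d → ℂ) : ℂ :=
  ∑ s ∈ S.filter (fun s => s k = 1), ∏ j ∈ Finset.univ.erase k, z j ^ (s j + 1).toNat

/-!
Expanding `(z₁⋯z_d)·S(z)` in the variable `z_k` gives `(1 + z_k²)·Q_k + z_k·R_k`, where `Q_k`
and `R_k` do not involve `z_k`; the constant coefficient equals `Q_k` because negating the
`k`-th coordinate maps the steps with `s_k = -1` onto those with `s_k = 1`. Hence
`t H_t - z_k H_{z_k} = -t (1 - z_k²) Q_k`, and `t ≠ 0` on the variety `H = 0`.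
-/

open Finset Function

section

variable {d : ℕ} {S : Finset (Fin d → ℤ)} {k : Fin d}

noncomputable def omitMonomial (k : Fin d) (s : Fin d → ℤ) (z : Fin d → ℂ) : ℂ :=
  ∏ j ∈ univ.erase k, z j ^ (s j + 1).toNat

/-- `(∏_{j≠k} z_j)·S₀^{(k)}(z_{k̂})`. -/
noncomputable def Rker (d : ℕ) (S : Finset (Fin d → ℤ)) (k : Fin d) (z : Fin d → ℂ) : ℂ :=
  ∑ s ∈ S.filter (fun s => s k = 0), omitMonomial k s z

lemma omitMonomial_update_self (s : Fin d → ℤ) (z : Fin d → ℂ) (w : ℂ) :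
    omitMonomial k s (update z k w) = omitMonomial k s z :=
  prod_congr rfl fun j hj => by rw [update_of_ne (mem_erase.mp hj).1]

lemma omitMonomial_update_step_self (s : Fin d → ℤ) (a : ℤ) (z : Fin d → ℂ) :
    omitMonomial k (update s k a) z = omitMonomial k s z :=
  prod_congr rfl fun j hj => by rw [update_of_ne (mem_erase.mp hj).1]

lemma Qker_update_self (z : Fin d → ℂ) (w : ℂ) : Qker d S k (update z k w) = Qker d S k z :=
  sum_congr rfl fun s _ => omitMonomial_update_self s z w

lemma Rker_update_self (z : Fin d → ℂ) (w : ℂ) : Rker d S k (update z k w) = Rker d S k z :=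
  sum_congr rfl fun s _ => omitMonomial_update_self s z w

lemma sum_omitMonomial_neg_one_eq_Qker (hsym : ∀ s ∈ S, update s k (-(s k)) ∈ S)
    (z : Fin d → ℂ) : ∑ s ∈ S.filter (fun s => s k = -1), omitMonomial k s z = Qker d S k z := by
  have flip_mem : ∀ a b : ℤ, b = -a → ∀ s ∈ S.filter (fun s => s k = a),
      update s k b ∈ S.filter (fun s => s k = b) := by
    rintro a b rfl s hs
    obtain ⟨hsS, rfl⟩ := mem_filter.mp hs
    exact mem_filter.mpr ⟨hsym s hsS, update_self _ _ _⟩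
  have flip_flip : ∀ a b : ℤ, ∀ s ∈ S.filter (fun s => s k = a), update (update s k b) k a = s := by
    rintro a b s hs
    rw [update_idem, ← (mem_filter.mp hs).2, update_eq_self]
  refine sum_nbij' (fun s => update s k 1) (fun s => update s k (-1)) (flip_mem (-1) 1 rfl)
    (flip_mem 1 (-1) rfl) (flip_flip (-1) 1) (flip_flip 1 (-1))
    fun s _ => (omitMonomial_update_step_self s 1 z).symm

lemma prod_pow_eq_pow_mul_omitMonomial (s : Fin d → ℤ) (z : Fin d → ℂ) :
    ∏ j, z j ^ (s j + 1).toNat = z k ^ (s k + 1).toNat * omitMonomial k s z :=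
  (mul_prod_erase univ _ (mem_univ k)).symm

lemma kerPoly_eq_of_symm (hS : ∀ s ∈ S, s k = -1 ∨ s k = 0 ∨ s k = 1)
    (hsym : ∀ s ∈ S, update s k (-(s k)) ∈ S) (z : Fin d → ℂ) :
    kerPoly d S z = (1 + z k ^ 2) * Qker d S k z + z k * Rker d S k z := by
  have split : ∀ s ∈ S, ∏ j, z j ^ (s j + 1).toNat =
      (if s k = -1 then omitMonomial k s z else 0) + z k * (if s k = 0 then omitMonomial k s z
        else 0) + z k ^ 2 * (if s k = 1 then omitMonomial k s z else 0) := by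
    intro s hs
    rw [prod_pow_eq_pow_mul_omitMonomial (k := k)]
    rcases hS s hs with h | h | h <;> simp [h]
  rw [kerPoly, sum_congr rfl split, sum_add_distrib, sum_add_distrib, ← mul_sum, ← mul_sum,
    ← sum_filter, ← sum_filter, ← sum_filter, sum_omitMonomial_neg_one_eq_Qker hsym]
  change Qker d S k z + z k * Rker d S k z + z k ^ 2 * Qker d S k z = _
  ring

lemma hasDerivAt_kerPoly_update (hS : ∀ s ∈ S, s k = -1 ∨ s k = 0 ∨ s k = 1)
    (hsym : ∀ s ∈ S, update s k (-(s k)) ∈ S) (z : Fin d → ℂ) (w : ℂ) :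
    HasDerivAt (fun w => kerPoly d S (update z k w))
      (2 * w * Qker d S k z + Rker d S k z) w := by
  have expand : (fun w => kerPoly d S (update z k w)) =
      fun w => (1 + w ^ 2) * Qker d S k z + w * Rker d S k z := by
    funext w
    rw [kerPoly_eq_of_symm hS hsym, update_self, Qker_update_self, Rker_update_self]
  rw [expand]
  refine ((((hasDerivAt_pow 2 w).const_add 1).mul_const (Qker d S k z)).fun_add
    ((hasDerivAt_id' w).mul_const (Rker d S k z))).congr_deriv ?_
  push_cast
  ring

end

/-- Characterization of critical points: a point of the variety `H = 0` satisfies the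
critical point equations `t H_t = z_k H_{z_k}` (for all `k`) if and only if for every
`k` either `z_k = ±1` or the polynomial `(∏_{j≠k} z_j)·S₁^{(k)}` vanishes at `z`. -/
theorem critical_point_characterization (d : ℕ) (S : Finset (Fin d → ℤ))
    (hsteps : ∀ s ∈ S, (∀ k, s k = -1 ∨ s k = 0 ∨ s k = 1) ∧ s ≠ 0)
    (hsym : ∀ s ∈ S, ∀ k, Function.update s k (-(s k)) ∈ S)
    (z : Fin d → ℂ) (t : ℂ) (hV : Hker d S z t = 0) :
    (∀ k, t * deriv (fun t' => Hker d S z t') t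
            = z k * deriv (fun w => Hker d S (Function.update z k w) t) (z k)) ↔
      (∀ k, z k = 1 ∨ z k = -1 ∨ Qker d S k z = 0) := by
  have ht : t ≠ 0 := left_ne_zero_of_mul_eq_one (sub_eq_zero.mp hV).symm
  refine forall_congr' fun k => ?_
  have hS : ∀ s ∈ S, s k = -1 ∨ s k = 0 ∨ s k = 1 := fun s hs => (hsteps s hs).1 k
  have hsymk : ∀ s ∈ S, update s k (-(s k)) ∈ S := fun s hs => hsym s hs k
  have deriv_t : deriv (fun t' => Hker d S z t') t = -kerPoly d S z :=
    ((hasDerivAt_mul_const _).const_sub 1).deriv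
  have deriv_z : deriv (fun w => Hker d S (update z k w) t) (z k) =
      -(t * (2 * z k * Qker d S k z + Rker d S k z)) :=
    ((hasDerivAt_kerPoly_update hS hsymk z (z k)).const_mul t).const_sub 1 |>.deriv
  rw [deriv_t, deriv_z, kerPoly_eq_of_symm hS hsymk]
  have factor : z k = 1 ∨ z k = -1 ∨ Qker d S k z = 0 ↔
      t * ((1 - z k) * (1 + z k) * Qker d S k z) = 0 := by
    simp only [mul_eq_zero, ht, sub_eq_zero, false_or, or_assoc, eq_comm (a := (1 : ℂ))]
    rw [add_eq_zero_iff_eq_neg']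
  rw [factor]
  constructor <;> intro h <;> linear_combination -h
end

section
/- Let S ⊆ {−1,0,1}^d \ {0} be symmetric about every axis and take at least one step with k-th coordinate +1 for each k. If (w, t_w) ∈ ℂ^{d+1} satisfies 1 − t_w (w_1⋯w_d) S(w) = 0, |t_w| ≤ 1/|S|, and |w_j| ≤ 1 for all j, then w_j ∈ {−1, 1} for every j and |t_w| = 1/|S|. Consequently the closed polydisk D centered at the origin with radii (1,…,1,1/|S|) meets the variety {H = 0} in at most 2^d points, all on the boundary torus. -/
open Finset RealInnerProductSpace

theorem exists_forall_eq_of_norm_sum_eq_card {ι E : Type*} [NormedAddCommGroup E]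
    [InnerProductSpace ℝ E] {s : Finset ι} {z : ι → E} (hs : s.Nonempty)
    (hz : ∀ i ∈ s, ‖z i‖ ≤ 1) (hsum : ‖∑ i ∈ s, z i‖ = #s) :
    ∃ y : E, ‖y‖ = 1 ∧ ∀ i ∈ s, z i = y := by
  set y := (#s : ℝ)⁻¹ • ∑ j ∈ s, z j
  have hn : (#s : ℝ) ≠ 0 := by exact_mod_cast hs.card_pos.ne'
  have hy : ‖y‖ = 1 := by
    rw [norm_smul, hsum, norm_inv, RCLike.norm_natCast, inv_mul_cancel₀ hn]
  have hle : ∀ i ∈ s, ⟪z i, y⟫ ≤ 1 := fun i hi =>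
    (real_inner_le_norm _ _).trans (by rw [hy, mul_one]; exact hz i hi)
  have hsum_inner : ∑ i ∈ s, ⟪z i, y⟫ = ∑ i ∈ s, (1 : ℝ) := by
    rw [← sum_inner, ← smul_inv_smul₀ hn (∑ j ∈ s, z j), real_inner_smul_left,
      real_inner_self_eq_norm_sq, hy, sum_const, nsmul_eq_mul]
    ring
  refine ⟨y, hy, fun i hi => eq_of_norm_le_re_inner_eq_norm_sq (𝕜 := ℝ) ((hz i hi).trans hy.ge) ?_⟩
  rw [hy, RCLike.re_to_real, (sum_eq_sum_iff_of_le hle).1 hsum_inner i hi, one_pow]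

theorem norm_prod_pow_le_one {ι 𝕜 : Type*} [Fintype ι] [NormedField 𝕜] {w : ι → 𝕜}
    (hw : ∀ j, ‖w j‖ ≤ 1) (e : ι → ℕ) : ‖∏ j, w j ^ e j‖ ≤ 1 := by
  rw [norm_prod]
  exact prod_le_one (fun j _ => norm_nonneg _) fun j _ => by
    rw [norm_pow]; exact pow_le_one₀ (norm_nonneg _) (hw j)

theorem prod_pow_update {ι M : Type*} [Fintype ι] [DecidableEq ι] [CommMonoid M] (w : ι → M)
    (s : ι → ℤ) (k : ι) (a : ℤ) :
    ∏ j, w j ^ (Function.update s k a j + 1).toNat =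
      w k ^ (a + 1).toNat * ∏ j ∈ univ.erase k, w j ^ (s j + 1).toNat := by
  rw [← mul_prod_erase univ _ (mem_univ k), Function.update_self]
  congr 1
  exact prod_congr rfl fun j hj => by rw [Function.update_of_ne (ne_of_mem_erase hj)]

section kerPoly

variable {d : ℕ} {S : Finset (Fin d → ℤ)} {w : Fin d → ℂ}

theorem norm_kerPoly_le_card (hw : ∀ j, ‖w j‖ ≤ 1) : ‖kerPoly d S w‖ ≤ #S :=
  (norm_sum_le _ _).trans <| by
    simpa using sum_le_sum fun s (_ : s ∈ S) => norm_prod_pow_le_one hw fun k => (s k + 1).toNat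

theorem sq_eq_one_of_norm_kerPoly_eq_card (hsym : ∀ s ∈ S, ∀ k, Function.update s k (-(s k)) ∈ S)
    (hfwd : ∀ k, ∃ s ∈ S, s k = 1) (hw : ∀ j, ‖w j‖ ≤ 1) (hK : ‖kerPoly d S w‖ = #S)
    (k : Fin d) : w k ^ 2 = 1 := by
  obtain ⟨s, hs, hsk⟩ := hfwd k
  obtain ⟨c, hc, hterm⟩ := exists_forall_eq_of_norm_sum_eq_card ⟨s, hs⟩
    (fun t (_ : t ∈ S) => norm_prod_pow_le_one hw fun j => (t j + 1).toNat) hK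
  set P := ∏ j ∈ univ.erase k, w j ^ (s j + 1).toNat
  have h_fwd : w k ^ 2 * P = c := by
    rw [← hterm s hs]
    conv_rhs => rw [← Function.update_eq_self k s]
    rw [prod_pow_update, hsk]; rfl
  have h_bwd : P = c := by
    rw [← hterm _ (hsym s hs k), prod_pow_update, hsk]; simp [P]
  have hP : P ≠ 0 := by rw [h_bwd, ← norm_ne_zero_iff, hc]; exact one_ne_zero
  exact mul_right_cancel₀ hP (by rw [h_fwd, h_bwd, one_mul])

theorem norm_kerPoly_eq_card_of_mem_polydisk {tw : ℂ} (heq : 1 - tw * kerPoly d S w = 0)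
    (htw : ‖tw‖ ≤ 1 / #S) (hw : ∀ j, ‖w j‖ ≤ 1) :
    ‖kerPoly d S w‖ = #S ∧ ‖tw‖ = 1 / #S := by
  have hK := norm_kerPoly_le_card (S := S) hw
  have h1 : ‖tw‖ * ‖kerPoly d S w‖ = 1 := by rw [← norm_mul, ← sub_eq_zero.mp heq, norm_one]
  have hn : (0 : ℝ) < #S := by
    by_contra! h
    nlinarith [norm_nonneg tw, norm_nonneg (kerPoly d S w)]
  rw [le_div_iff₀ hn] at htw
  have : ‖kerPoly d S w‖ = #S := by nlinarith [norm_nonneg tw, norm_nonneg (kerPoly d S w)]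
  refine ⟨this, ?_⟩
  rw [this] at h1
  field_simp
  linarith

theorem eq_one_or_neg_one_of_mem_polydisk
    (hsym : ∀ s ∈ S, ∀ k, Function.update s k (-(s k)) ∈ S) (hfwd : ∀ k, ∃ s ∈ S, s k = 1)
    {tw : ℂ} (heq : 1 - tw * kerPoly d S w = 0) (htw : ‖tw‖ ≤ 1 / #S) (hw : ∀ j, ‖w j‖ ≤ 1) :
    (∀ j, w j = 1 ∨ w j = -1) ∧ ‖tw‖ = 1 / #S :=
  have hK := norm_kerPoly_eq_card_of_mem_polydisk heq htw hw
  ⟨fun j => sq_eq_one_iff.1 (sq_eq_one_of_norm_kerPoly_eq_card hsym hfwd hw hK.1 j), hK.2⟩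

end kerPoly

theorem minimal_points_general (d : ℕ) (S : Finset (Fin d → ℤ))
    (hsym : ∀ s ∈ S, ∀ k, Function.update s k (-(s k)) ∈ S)
    (hfwd : ∀ k, ∃ s ∈ S, s k = 1) :
    (∀ (w : Fin d → ℂ) (tw : ℂ),
        1 - tw * kerPoly d S w = 0 →
        ‖tw‖ ≤ 1 / S.card →
        (∀ j, ‖w j‖ ≤ 1) →
        (∀ j, w j = 1 ∨ w j = -1) ∧ ‖tw‖ = 1 / S.card) ∧
    ({p : (Fin d → ℂ) × ℂ |
        1 - p.2 * kerPoly d S p.1 = 0 ∧ ‖p.2‖ ≤ 1 / S.card ∧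
        ∀ j, ‖p.1 j‖ ≤ 1}.Finite ∧
      {p : (Fin d → ℂ) × ℂ |
        1 - p.2 * kerPoly d S p.1 = 0 ∧ ‖p.2‖ ≤ 1 / S.card ∧
        ∀ j, ‖p.1 j‖ ≤ 1}.ncard ≤ 2 ^ d) := by
  refine ⟨fun w tw => eq_one_or_neg_one_of_mem_polydisk hsym hfwd, ?_⟩
  set V := {p : (Fin d → ℂ) × ℂ |
    1 - p.2 * kerPoly d S p.1 = 0 ∧ ‖p.2‖ ≤ 1 / #S ∧ ∀ j, ‖p.1 j‖ ≤ 1}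
  set signs := Fintype.piFinset fun _ : Fin d => ({1, -1} : Finset ℂ)
  have hmaps : Set.MapsTo Prod.fst V signs := fun p hp => by
    simpa [signs] using (eq_one_or_neg_one_of_mem_polydisk hsym hfwd hp.1 hp.2.1 hp.2.2).1
  have hinj : Set.InjOn Prod.fst V := fun p hp q hq hpq => by
    have ht : ∀ r ∈ V, r.2 = (kerPoly d S r.1)⁻¹ := fun r hr =>
      eq_inv_of_mul_eq_one_left (sub_eq_zero.1 hr.1).symm
    exact Prod.ext hpq (by rw [ht p hp, ht q hq, hpq])
  refine ⟨.of_injOn hmaps hinj signs.finite_toSet, ?_⟩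
  calc V.ncard ≤ (signs : Set (Fin d → ℂ)).ncard := Set.ncard_le_ncard_of_injOn _ hmaps hinj
    _ = 2 ^ d := by rw [Set.ncard_coe_finset, Fintype.card_piFinset_const, card_pair (by norm_num)]

/-- Minimality: any point of the variety `{1 - t(z₁⋯z_d)S(z) = 0}` lying in the closed
polydisk of radii `(1,…,1,1/|S|)` has all `w_j = ±1` and `|t_w| = 1/|S|`; consequently the
polydisk meets the variety in at most `2^d` points. -/
theorem minimal_points (d : ℕ) (S : Finset (Fin d → ℤ))
    (hsteps : ∀ s ∈ S, (∀ k, s k = -1 ∨ s k = 0 ∨ s k = 1) ∧ s ≠ 0)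
    (hsym : ∀ s ∈ S, ∀ k, Function.update s k (-(s k)) ∈ S)
    (hfwd : ∀ k, ∃ s ∈ S, s k = 1) :
    (∀ (w : Fin d → ℂ) (tw : ℂ),
        1 - tw * kerPoly d S w = 0 →
        ‖tw‖ ≤ 1 / S.card →
        (∀ j, ‖w j‖ ≤ 1) →
        (∀ j, w j = 1 ∨ w j = -1) ∧ ‖tw‖ = 1 / S.card) ∧
    ({p : (Fin d → ℂ) × ℂ |
        1 - p.2 * kerPoly d S p.1 = 0 ∧ ‖p.2‖ ≤ 1 / S.card ∧
        ∀ j, ‖p.1 j‖ ≤ 1}.Finite ∧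
      {p : (Fin d → ℂ) × ℂ |
        1 - p.2 * kerPoly d S p.1 = 0 ∧ ‖p.2‖ ≤ 1 / S.card ∧
        ∀ j, ‖p.1 j‖ ≤ 1}.ncard ≤ 2 ^ d) :=
  minimal_points_general d S hsym hfwd
end

section
/- Let S ⊆ {−1,0,1}^d \ {0} be symmetric about every axis with at least one step moving forward in each coordinate, and let w ∈ {−1,1}^d with t_w = 1/((w_1⋯w_d) S(w)) satisfying |t_w| = 1/|S|. Then for every k, the value S_1^{(k)}(w_{\hat{k}}) of the sub-polynomial collecting steps with k-th coordinate 1 is nonzero. -/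
/-!
At a point `w ∈ {-1,1}^d` every monomial `w^s` is `±1`, so `|S(w)| ≤ |S|`, and the condition
`|t_w| = 1/|S|` says this triangle inequality is an equality: all monomials share one sign `ε`.
A step `s` with `s_k = 1` then contributes `w^s / w_k = ε / w_k` to `S₁^{(k)}(w_{k̂})`, and
these contributions add up without cancellation.
-/

/-- The characteristic Laurent polynomial `S(z) = ∑_{s ∈ S} z^s`, evaluated. -/
noncomputable def charPoly (d : ℕ) (S : Finset (Fin d → ℤ)) (z : Fin d → ℂ) : ℂ :=
  ∑ s ∈ S, ∏ k, z k ^ s k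

/-- `S₁^{(k)}(z_{k̂}) = ∑_{s ∈ S, s_k = 1} ∏_{j ≠ k} z_j^{s_j}`, the inventory of steps
with `k`-th coordinate `1`, in the remaining variables. -/
noncomputable def S1 (d : ℕ) (S : Finset (Fin d → ℤ)) (k : Fin d) (z : Fin d → ℂ) : ℂ :=
  ∑ s ∈ S.filter (fun s => s k = 1), ∏ j ∈ Finset.univ.erase k, z j ^ s j

open Finset

theorem Finset.eq_one_or_eq_neg_one_of_abs_sum_eq_card {ι R : Type*} [Ring R] [LinearOrder R]
    [IsOrderedRing R] {s : Finset ι} {f : ι → R} (hf : ∀ i ∈ s, |f i| ≤ 1)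
    (h : |∑ i ∈ s, f i| = #s) : (∀ i ∈ s, f i = 1) ∨ ∀ i ∈ s, f i = -1 := by
  rcases (abs_eq (Nat.cast_nonneg #s)).mp h with h | h
  · left
    refine (sum_eq_sum_iff_of_le fun i hi => (abs_le.mp (hf i hi)).2).mp ?_
    simpa using h
  · right
    have hle : ∀ i ∈ s, -f i ≤ 1 := fun i hi => neg_le.mp (abs_le.mp (hf i hi)).1
    have hneg := (sum_eq_sum_iff_of_le hle).mp (by simp [sum_neg_distrib, h])
    exact fun i hi => neg_eq_iff_eq_neg.mp (hneg i hi)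

theorem abs_prod_zpow_eq_one {ι K : Type*} [Field K] [LinearOrder K] [IsStrictOrderedRing K]
    (t : Finset ι) {v : ι → K} (hv : ∀ j, |v j| = 1) (e : ι → ℤ) :
    |∏ j ∈ t, v j ^ e j| = 1 := by
  simp [abs_prod, abs_zpow, hv]

theorem prod_erase_zpow_eq_div {ι K : Type*} [Fintype ι] [DecidableEq ι] [Field K]
    {v : ι → K} {e : ι → ℤ} {k : ι} (hk : e k = 1) (hvk : v k ≠ 0) :
    ∏ j ∈ univ.erase k, v j ^ e j = (∏ j, v j ^ e j) / v k := by
  rw [← mul_prod_erase univ _ (mem_univ k), hk, zpow_one, mul_div_cancel_left₀ _ hvk]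

variable {d : ℕ} {S : Finset (Fin d → ℤ)} {w : Fin d → ℂ}

theorem norm_charPoly_eq_card_of_norm_inv (hw : ∀ j, ‖w j‖ = 1)
    (h : ‖1 / ((∏ j, w j) * charPoly d S w)‖ = 1 / #S) : ‖charPoly d S w‖ = #S := by
  simpa [norm_mul, norm_prod, hw] using h

theorem exists_monomial_eq_of_norm_charPoly_eq_card (hw : ∀ j, w j = 1 ∨ w j = -1)
    (h : ‖charPoly d S w‖ = #S) :
    ∃ ε : ℂ, ε ≠ 0 ∧ ∀ s ∈ S, ∏ j, w j ^ s j = ε := by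
  lift w to Fin d → ℝ using fun j => by rcases hw j with h | h <;> simp [h]
  have hv : ∀ j, |w j| = 1 := fun j => by
    rw [← Real.norm_eq_abs, ← Complex.norm_real]
    rcases hw j with h | h <;> simp only at h <;> simp [h]
  have hreal :
      charPoly d S (fun j => (w j : ℂ)) = ((∑ s ∈ S, ∏ j, w j ^ s j : ℝ) : ℂ) := by
    simp [charPoly]
  rw [hreal, Complex.norm_real, Real.norm_eq_abs] at h
  rcases eq_one_or_eq_neg_one_of_abs_sum_eq_card
    (fun s _ => (abs_prod_zpow_eq_one univ hv s).le) h with hsign | hsign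
  · exact ⟨1, one_ne_zero, fun s hs => by simp only; exact_mod_cast hsign s hs⟩
  · exact ⟨-1, by norm_num, fun s hs => by simp only; exact_mod_cast hsign s hs⟩

theorem S1_eq_card_mul_of_monomial_eq {ε : ℂ} (hconst : ∀ s ∈ S, ∏ j, w j ^ s j = ε)
    {k : Fin d} (hwk : w k ≠ 0) : S1 d S k w = #(S.filter (fun s => s k = 1)) * (ε / w k) := by
  rw [S1, sum_congr rfl fun s hs => ?_, sum_const, nsmul_eq_mul]
  obtain ⟨hsS, hsk⟩ := mem_filter.mp hs
  rw [prod_erase_zpow_eq_div hsk hwk, hconst s hsS]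

theorem S1_nonzero_at_minimal_points_general (d : ℕ) (S : Finset (Fin d → ℤ))
    (hfwd : ∀ k, ∃ s ∈ S, s k = 1)
    (w : Fin d → ℂ) (hw : ∀ j, w j = 1 ∨ w j = -1)
    (tw : ℂ) (htw : tw = 1 / ((∏ j, w j) * charPoly d S w))
    (hmin : ‖tw‖ = 1 / S.card) :
    ∀ k, S1 d S k w ≠ 0 := by
  intro k
  subst htw
  have hunit : ∀ j, ‖w j‖ = 1 := fun j => by rcases hw j with h | h <;> simp [h]
  obtain ⟨ε, hε, hconst⟩ :=
    exists_monomial_eq_of_norm_charPoly_eq_card hw (norm_charPoly_eq_card_of_norm_inv hunit hmin)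
  obtain ⟨s, hs, hsk⟩ := hfwd k
  have hwk : w k ≠ 0 := norm_ne_zero_iff.mp (by simp [hunit k])
  have hcard : #(S.filter (fun s => s k = 1)) ≠ 0 :=
    card_ne_zero_of_mem (mem_filter.mpr ⟨hs, hsk⟩)
  rw [S1_eq_card_mul_of_monomial_eq hconst hwk]
  exact mul_ne_zero (Nat.cast_ne_zero.mpr hcard) (div_ne_zero hε hwk)

/-- At any minimal point `w ∈ {-1,1}^d` with `t_w = 1/((w₁⋯w_d)S(w))` of modulus `1/|S|`,
each sub-polynomial `S₁^{(k)}` is nonzero. -/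
theorem S1_nonzero_at_minimal_points (d : ℕ) (S : Finset (Fin d → ℤ))
    (hsteps : ∀ s ∈ S, (∀ k, s k = -1 ∨ s k = 0 ∨ s k = 1) ∧ s ≠ 0)
    (hsym : ∀ s ∈ S, ∀ k, Function.update s k (-(s k)) ∈ S)
    (hfwd : ∀ k, ∃ s ∈ S, s k = 1)
    (w : Fin d → ℂ) (hw : ∀ j, w j = 1 ∨ w j = -1)
    (tw : ℂ) (htw : tw = 1 / ((∏ j, w j) * charPoly d S w))
    (hmin : ‖tw‖ = 1 / S.card) :
    ∀ k, S1 d S k w ≠ 0 :=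
  S1_nonzero_at_minimal_points_general d S hfwd w hw tw htw hmin
end

section
/- Let s_i(n) count walks of length n starting at the origin, taking steps in a highly symmetric, non-trivial step set S ⊆ {−1,0,1}^d \ {0}, staying in ℕ^d, and ending at i ∈ ℕ^d. Then the multivariate generating function F(z,t) = ∑_{n,i} s_i(n) z^i t^n satisfies a functional equation of the form (z_1⋯z_d)(1 − t S(z)) F(z,t) = z_1⋯z_d + ∑_{k=1}^d A_k(z_{\hat{k}}, t), where each A_k is a formal power series in t with coefficients polynomial in the variables z_j with j ≠ k (i.e., not involving z_k). -/
/-- The number of walks of length `n`, taking steps in `S`, starting at the origin,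
staying in the non-negative orthant `ℕ^d`, and ending at `i`. -/
noncomputable def WalkCount (d : ℕ) (S : Finset (Fin d → ℤ)) (n : ℕ) (i : Fin d → ℤ) : ℕ :=
  Nat.card {w : Fin n → (Fin d → ℤ) //
    (∀ m, w m ∈ S) ∧
    (∀ m : ℕ, ∀ k, 0 ≤ ∑ l ∈ Finset.univ.filter (fun l : Fin n => (l : ℕ) < m), w l k) ∧
    (∀ k, ∑ m, w m k = i k)}

/-- The multivariate generating function `F(z,t) ∈ ℚ[z₁,…,z_d][[t]]` of the walks,
whose coefficient of `t^n` is the polynomial `∑_i s_i(n) z^i` (endpoints of length-`n`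
walks lie in `[0,n]^d`). -/
noncomputable def walkGF (d : ℕ) (S : Finset (Fin d → ℤ)) :
    PowerSeries (MvPolynomial (Fin d) ℚ) :=
  PowerSeries.mk fun n =>
    ∑ i : Fin d → Fin (n + 1),
      MvPolynomial.C ((WalkCount d S n fun j => ((i j : ℕ) : ℤ)) : ℚ) *
        ∏ j, MvPolynomial.X j ^ (i j : ℕ)

/-- The polynomial `(z₁⋯z_d)·S(z)`. -/
noncomputable def kerMv (d : ℕ) (S : Finset (Fin d → ℤ)) : MvPolynomial (Fin d) ℚ :=
  ∑ s ∈ S, ∏ j, MvPolynomial.X j ^ (s j + 1).toNat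


/-!
Compare the coefficients of `t^(n+1) z^e` on the left. Writing `i = e - (1,…,1)`, they are
`s_i(n+1) - ∑_{s ∈ S} s_{i-s}(n)`, which vanishes by removing the last step whenever `i ∈ ℕ^d`,
that is, whenever every `z_k` divides `z^e`. Hence every coefficient of the left side minus
`z₁⋯z_d` is a sum of monomials each missing some variable `z_k`; assigning every such monomial
to one missing variable produces the `A_k`.
-/

open Finset

def IsOrthantWalk {d n : ℕ} (S : Finset (Fin d → ℤ)) (i : Fin d → ℤ) (w : Fin n → Fin d → ℤ) :
    Prop :=
  (∀ m, w m ∈ S) ∧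
    (∀ m : ℕ, ∀ k, 0 ≤ ∑ l ∈ univ.filter (fun l : Fin n => (l : ℕ) < m), w l k) ∧
    (∀ k, ∑ m, w m k = i k)

section Walks

variable {d : ℕ} {S : Finset (Fin d → ℤ)} {n : ℕ} {i : Fin d → ℤ}

theorem walkCount_eq_card :
    WalkCount d S n i = Nat.card {w : Fin n → Fin d → ℤ // IsOrthantWalk S i w} :=
  rfl

instance : Finite {w : Fin n → Fin d → ℤ // IsOrthantWalk S i w} :=
  Finite.of_injective (fun w m => (⟨w.1 m, w.2.1 m⟩ : S)) fun _ _ h =>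
    Subtype.ext (funext fun m => congrArg Subtype.val (congrFun h m))

theorem filter_val_lt_eq_univ {m : ℕ} (h : n ≤ m) :
    univ.filter (fun l : Fin n => (l : ℕ) < m) = univ := by
  ext l
  simp only [mem_filter, mem_univ, true_and, iff_true]
  omega

theorem sum_filter_val_lt_castSucc {M : Type*} [AddCommMonoid M] {m : ℕ} (hm : m ≤ n)
    (f : Fin (n + 1) → M) :
    ∑ l ∈ univ.filter (fun l : Fin (n + 1) => (l : ℕ) < m), f l =
      ∑ l ∈ univ.filter (fun l : Fin n => (l : ℕ) < m), f l.castSucc := by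
  rw [sum_filter, sum_filter, Fin.sum_univ_castSucc, Fin.val_last, if_neg (by omega), add_zero]
  rfl

theorem IsOrthantWalk.nonneg {w : Fin n → Fin d → ℤ} (hw : IsOrthantWalk S i w) (k : Fin d) :
    0 ≤ i k := by
  simpa [filter_val_lt_eq_univ le_rfl, hw.2.2 k] using hw.2.1 n k

theorem IsOrthantWalk.le_length {w : Fin n → Fin d → ℤ} (hw : IsOrthantWalk S i w)
    (hS : ∀ s ∈ S, ∀ k, s k ≤ 1) (k : Fin d) : i k ≤ n := by
  rw [← hw.2.2 k]
  calc ∑ m, w m k ≤ ∑ _m : Fin n, (1 : ℤ) := sum_le_sum fun m _ => hS _ (hw.1 m) k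
    _ = n := by simp

theorem walkCount_eq_zero_of_neg {k : Fin d} (hk : i k < 0) : WalkCount d S n i = 0 :=
  Nat.card_eq_zero.2 <| .inl ⟨fun w => (IsOrthantWalk.nonneg w.2 k).not_gt hk⟩

theorem walkCount_eq_zero_of_lt (hS : ∀ s ∈ S, ∀ k, s k ≤ 1) {k : Fin d} (hk : (n : ℤ) < i k) :
    WalkCount d S n i = 0 :=
  Nat.card_eq_zero.2 <| .inl ⟨fun w => (IsOrthantWalk.le_length w.2 hS k).not_gt hk⟩

theorem walkCount_zero_zero : WalkCount d S 0 0 = 1 := by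
  rw [walkCount_eq_card, Nat.card_eq_one_iff_unique]
  refine ⟨inferInstance, ⟨⟨Fin.elim0, fun m => m.elim0, fun _ _ => ?_, fun _ => ?_⟩⟩⟩ <;> simp

/-- The hypothesis `0 ≤ i` is the prefix-sum condition of the full walk, which the prefix
conditions of `v` do not cover. -/
theorem isOrthantWalk_snoc_iff (hi : 0 ≤ i) (v : Fin n → Fin d → ℤ) (s : Fin d → ℤ) :
    IsOrthantWalk S i (Fin.snoc v s : Fin (n + 1) → Fin d → ℤ) ↔
      s ∈ S ∧ IsOrthantWalk S (i - s) v := by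
  set w : Fin (n + 1) → Fin d → ℤ := Fin.snoc v s
  have hsum (k : Fin d) : ∑ m, w m k = ∑ m, v m k + s k := by
    simp [w, Fin.sum_univ_castSucc]
  have hprefix {m : ℕ} (hm : m ≤ n) (k : Fin d) :
      ∑ l ∈ univ.filter (fun l : Fin (n + 1) => (l : ℕ) < m), w l k =
        ∑ l ∈ univ.filter (fun l : Fin n => (l : ℕ) < m), v l k := by
    simpa [w] using sum_filter_val_lt_castSucc hm (fun l => w l k)
  simp only [IsOrthantWalk, Fin.forall_fin_succ', w, Fin.snoc_castSucc, Fin.snoc_last, hsum,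
    Pi.sub_apply, eq_sub_iff_add_eq]
  constructor
  · rintro ⟨⟨hv, hs⟩, hpos, hend⟩
    refine ⟨hs, hv, fun m k => ?_, hend⟩
    rcases le_total m n with hm | hm
    · rw [← hprefix hm]
      exact hpos m k
    · rw [filter_val_lt_eq_univ hm, ← filter_val_lt_eq_univ le_rfl, ← hprefix le_rfl]
      exact hpos n k
  · rintro ⟨hs, hv, hpos, hend⟩
    refine ⟨⟨hv, hs⟩, fun m k => ?_, hend⟩
    rcases le_or_gt m n with hm | hm
    · rw [hprefix hm]
      exact hpos m k
    · rw [filter_val_lt_eq_univ hm, hsum, hend]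
      exact hi k

def snocEquiv (hi : 0 ≤ i) :
    (Σ s : S, {v : Fin n → Fin d → ℤ // IsOrthantWalk S (i - s) v}) ≃
      {w : Fin (n + 1) → Fin d → ℤ // IsOrthantWalk S i w} where
  toFun p := ⟨Fin.snoc p.2.1 p.1.1, (isOrthantWalk_snoc_iff hi _ _).2 ⟨p.1.2, p.2.2⟩⟩
  invFun w :=
    have hw := (isOrthantWalk_snoc_iff hi (Fin.init w.1) (w.1 (Fin.last n))).1
      (by rw [Fin.snoc_init_self]; exact w.2)
    ⟨⟨w.1 (Fin.last n), hw.1⟩, ⟨Fin.init w.1, hw.2⟩⟩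
  left_inv p := Sigma.subtype_ext (Subtype.ext (by simp)) (by simp)
  right_inv w := Subtype.ext (Fin.snoc_init_self w.1)

theorem walkCount_succ (hi : 0 ≤ i) :
    WalkCount d S (n + 1) i = ∑ s ∈ S, WalkCount d S n (i - s) := by
  rw [walkCount_eq_card, ← Nat.card_congr (snocEquiv hi), Nat.card_sigma, ← sum_coe_sort S]
  rfl

end Walks

theorem PowerSeries.C_sub_X_mul_C_mul_eq {R : Type*} [CommRing R] (a b : R) {F : PowerSeries R}
    (hF : constantCoeff F = 1) :
    (C a - X * C b) * F = C a + X * mk fun n => a * coeff (n + 1) F - b * coeff n F := by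
  ext (_ | n)
  · simp [sub_mul, hF]
  · simp [sub_mul, mul_assoc, coeff_succ_X_mul, coeff_C_mul]

namespace MvPolynomial

variable {σ R : Type*} [CommSemiring R]

theorem prod_X_pow_eq_monomial_equivFunOnFinite [Fintype σ] (g : σ → ℕ) :
    ∏ j, (X j : MvPolynomial σ R) ^ g j = monomial (Finsupp.equivFunOnFinite.symm g) 1 := by
  rw [monomial_eq, C_1, one_mul, Finsupp.prod_fintype _ _ fun _ => pow_zero _]
  rfl

theorem exists_sum_eq_of_forall_mem_support_exists_eq_zero [Fintype σ] {p : MvPolynomial σ R}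
    (hp : ∀ e ∈ p.support, ∃ k, e k = 0) :
    ∃ A : σ → MvPolynomial σ R, (∀ k e, e k ≠ 0 → coeff e (A k) = 0) ∧ ∑ k, A k = p := by
  classical
  choose κ hκ using hp
  refine ⟨fun k => ∑ e ∈ p.support.attach,
    if κ e e.2 = k then monomial e.1 (coeff e.1 p) else 0, fun k e he => ?_, ?_⟩
  · rw [coeff_sum]
    refine sum_eq_zero fun e' _ => ?_
    split_ifs with h
    · rw [coeff_monomial, if_neg]
      rintro rfl
      exact he (h ▸ hκ _ _)
    · exact coeff_zero e
  · rw [sum_comm]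
    simp only [sum_ite_eq, mem_univ, if_true]
    rw [sum_attach p.support fun e => monomial e (coeff e p), support_sum_monomial_coeff]

end MvPolynomial

section GeneratingFunction

open MvPolynomial

variable {d : ℕ} {S : Finset (Fin d → ℤ)}

theorem constantCoeff_walkGF :
    PowerSeries.constantCoeff (walkGF d S) = 1 := by
  rw [← PowerSeries.coeff_zero_eq_constantCoeff_apply, walkGF, PowerSeries.coeff_mk]
  simp [Pi.zero_def.symm, walkCount_zero_zero]

theorem coeff_coeff_walkGF (hS : ∀ s ∈ S, ∀ k, s k ≤ 1) (n : ℕ) (e : Fin d →₀ ℕ) :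
    coeff e (PowerSeries.coeff n (walkGF d S)) = WalkCount d S n fun j => (e j : ℤ) := by
  simp only [walkGF, PowerSeries.coeff_mk, prod_X_pow_eq_monomial_equivFunOnFinite,
    C_mul_monomial, mul_one, coeff_sum, coeff_monomial]
  by_cases he : ∀ j, e j ≤ n
  · rw [Fintype.sum_eq_single fun j => ⟨e j, Nat.lt_succ_of_le (he j)⟩]
    · rw [if_pos (by ext; rfl)]
    · intro b hb
      rw [if_neg]
      contrapose! hb
      ext j
      simp [← hb]
  · push Not at he
    obtain ⟨j, hj⟩ := he
    rw [walkCount_eq_zero_of_lt hS (k := j) (by exact_mod_cast hj), Nat.cast_zero]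
    refine sum_eq_zero fun b _ => if_neg ?_
    rintro rfl
    simp at hj
    omega

theorem coeff_monomial_mul_coeff_walkGF (hS : ∀ s ∈ S, ∀ k, s k ≤ 1) {g : Fin d → ℤ}
    (hg : 0 ≤ g) (n : ℕ) (e : Fin d →₀ ℕ) :
    coeff e (monomial (Finsupp.equivFunOnFinite.symm fun j => (g j).toNat) (1 : ℚ) *
        PowerSeries.coeff n (walkGF d S)) =
      WalkCount d S n ((fun j => (e j : ℤ)) - g) := by
  rw [coeff_monomial_mul', one_mul]
  split_ifs with hle
  · rw [coeff_coeff_walkGF hS]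
    congr 2
    ext j
    have hj := hle j
    have : 0 ≤ g j := hg j
    simp only [Finsupp.equivFunOnFinite_symm_apply_apply] at hj
    simp only [Finsupp.coe_tsub, Pi.sub_apply, Finsupp.equivFunOnFinite_symm_apply_apply]
    omega
  · obtain ⟨j, hj⟩ : ∃ j, e j < (g j).toNat := by simpa [Finsupp.le_def] using hle
    rw [walkCount_eq_zero_of_neg (k := j) (by simp only [Pi.sub_apply]; omega), Nat.cast_zero]

/-- At monomials divisible by `z₁⋯z_d` the coefficient is `walkCount_succ` at `e - 1`. -/
theorem coeff_prod_X_mul_sub_kerMv_mul_eq_zero (hlow : ∀ s ∈ S, ∀ k, -1 ≤ s k)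
    (hup : ∀ s ∈ S, ∀ k, s k ≤ 1) (n : ℕ) {e : Fin d →₀ ℕ} (he : ∀ k, e k ≠ 0) :
    coeff e ((∏ j, X j) * PowerSeries.coeff (n + 1) (walkGF d S) -
      kerMv d S * PowerSeries.coeff n (walkGF d S)) = 0 := by
  set i : Fin d → ℤ := (fun j => (e j : ℤ)) - 1
  have hi : 0 ≤ i := fun k => by
    have := he k; simp only [i, Pi.sub_apply, Pi.one_apply, Pi.zero_apply]; omega
  have hprod : (∏ j, X j : MvPolynomial (Fin d) ℚ) =
      monomial (Finsupp.equivFunOnFinite.symm fun j => ((1 : Fin d → ℤ) j).toNat) 1 := by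
    simp [← prod_X_pow_eq_monomial_equivFunOnFinite]
  have hker : kerMv d S = ∑ s ∈ S,
      monomial (Finsupp.equivFunOnFinite.symm fun j => ((s + 1) j).toNat) 1 :=
    sum_congr rfl fun s _ => prod_X_pow_eq_monomial_equivFunOnFinite _
  have hstep (s) (hs : s ∈ S) : (0 : Fin d → ℤ) ≤ s + 1 := fun k => by
    have := hlow s hs k; simp only [Pi.add_apply, Pi.one_apply, Pi.zero_apply]; omega
  rw [coeff_sub, sub_eq_zero, hprod, coeff_monomial_mul_coeff_walkGF hup zero_le_one,
    walkCount_succ hi, hker, sum_mul, coeff_sum, Nat.cast_sum]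
  refine sum_congr rfl fun s hs => ?_
  rw [coeff_monomial_mul_coeff_walkGF hup (hstep s hs), sub_add_eq_sub_sub_swap]

end GeneratingFunction

theorem kernel_functional_equation_general (d : ℕ) (S : Finset (Fin d → ℤ))
    (hsteps : ∀ s ∈ S, (∀ k, s k = -1 ∨ s k = 0 ∨ s k = 1) ∧ s ≠ 0) :
    ∃ A : Fin d → PowerSeries (MvPolynomial (Fin d) ℚ),
      (∀ k n (e : Fin d →₀ ℕ), e k ≠ 0 →
          MvPolynomial.coeff e (PowerSeries.coeff n (A k)) = 0) ∧
      (PowerSeries.C (∏ j, MvPolynomial.X j) -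
          PowerSeries.X * PowerSeries.C (kerMv d S)) * walkGF d S =
        PowerSeries.C (∏ j, MvPolynomial.X j) + ∑ k, A k := by
  have hlow : ∀ s ∈ S, ∀ k, -1 ≤ s k := fun s hs k => by have := (hsteps s hs).1 k; omega
  have hup : ∀ s ∈ S, ∀ k, s k ≤ 1 := fun s hs k => by have := (hsteps s hs).1 k; omega
  choose B hB_free hB_sum using fun n =>
    MvPolynomial.exists_sum_eq_of_forall_mem_support_exists_eq_zero fun e he => by
      by_contra! h
      exact MvPolynomial.mem_support_iff.1 he
        (coeff_prod_X_mul_sub_kerMv_mul_eq_zero hlow hup n h)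
  refine ⟨fun k => PowerSeries.X * PowerSeries.mk fun n => B n k, fun k n e he => ?_, ?_⟩
  · rcases n with _ | n
    · simp
    · rw [PowerSeries.coeff_succ_X_mul, PowerSeries.coeff_mk, hB_free n k e he]
  · rw [PowerSeries.C_sub_X_mul_C_mul_eq _ _ constantCoeff_walkGF, ← Finset.mul_sum]
    congr 2
    ext n : 1
    simp [hB_sum]

/-- The kernel functional equation: `(z₁⋯z_d)(1 - tS(z))F(z,t) = z₁⋯z_d + ∑_k A_k`,
where each `A_k` is a power series in `t` whose coefficients are polynomials not
involving the variable `z_k`. -/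
theorem kernel_functional_equation (d : ℕ) (S : Finset (Fin d → ℤ))
    (hsteps : ∀ s ∈ S, (∀ k, s k = -1 ∨ s k = 0 ∨ s k = 1) ∧ s ≠ 0)
    (hsym : ∀ s ∈ S, ∀ k, Function.update s k (-(s k)) ∈ S)
    (hfwd : ∀ k, ∃ s ∈ S, s k = 1) :
    ∃ A : Fin d → PowerSeries (MvPolynomial (Fin d) ℚ),
      (∀ k n (e : Fin d →₀ ℕ), e k ≠ 0 →
          MvPolynomial.coeff e (PowerSeries.coeff n (A k)) = 0) ∧
      (PowerSeries.C (∏ j, MvPolynomial.X j) -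
          PowerSeries.X * PowerSeries.C (kerMv d S)) * walkGF d S =
        PowerSeries.C (∏ j, MvPolynomial.X j) + ∑ k, A k :=
  kernel_functional_equation_general d S hsteps
end

section
/- Consider the 3-dimensional step set S = {(−1,0,±1),(1,0,±1),(0,1,±1),(0,−1,±1)} of 8 steps. Its characteristic polynomial is S(x,y,z) = (x + x^{−1} + y + y^{−1})(z + z^{−1}), and the denominator polynomial H = 1 − t(z²+1)(x+y)(xy+1) is smooth: H and its four partial derivatives H_x, H_y, H_z, H_t generate the unit ideal in ℚ[x,y,z,t] (equivalently, have no common complex zero). -/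
/-! `H` is affine in `t` with constant term `1`, so `H - t H_t = 1`: already `H` and `H_t`
have no common zero. -/

/-- `H(x,y,z,t) = 1 - t(z²+1)(x+y)(xy+1)`, the kernel denominator for the 3-dimensional
step set `{(±1,0,±1),(0,±1,±1)}`. -/
def H8 (x y z t : ℂ) : ℂ := 1 - t * (z ^ 2 + 1) * (x + y) * (x * y + 1)

theorem deriv_one_sub_mul_const {𝕜 : Type*} [NontriviallyNormedField 𝕜] (c t : 𝕜) :
    deriv (fun s => 1 - s * c) t = -c := by
  simp

theorem one_sub_mul_ne_zero_of_deriv_eq_zero {𝕜 : Type*} [NontriviallyNormedField 𝕜]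
    {c t : 𝕜} (h : deriv (fun s => 1 - s * c) t = 0) : 1 - t * c ≠ 0 := by
  rw [deriv_one_sub_mul_const, neg_eq_zero] at h
  simp [h]

theorem H8_eq_one_sub_mul (x y z t : ℂ) :
    H8 x y z t = 1 - t * ((z ^ 2 + 1) * (x + y) * (x * y + 1)) := by
  unfold H8
  ring

/-- For the 8-step 3-dimensional model `{(-1,0,±1),(1,0,±1),(0,1,±1),(0,-1,±1)}`:
the characteristic polynomial is `S(x,y,z) = (x + x⁻¹ + y + y⁻¹)(z + z⁻¹)`, and the
denominator `H = 1 - t(z²+1)(x+y)(xy+1)` is smooth: `H` and its four partial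
derivatives have no common complex zero. -/
theorem eight_step_smooth :
    (∀ x y z : ℂ, x ≠ 0 → y ≠ 0 → z ≠ 0 →
        x * z + x * z⁻¹ + x⁻¹ * z + x⁻¹ * z⁻¹ + y * z + y * z⁻¹ + y⁻¹ * z + y⁻¹ * z⁻¹
          = (x + x⁻¹ + y + y⁻¹) * (z + z⁻¹)) ∧
    ¬ ∃ x y z t : ℂ,
        H8 x y z t = 0 ∧
        deriv (fun x' => H8 x' y z t) x = 0 ∧
        deriv (fun y' => H8 x y' z t) y = 0 ∧
        deriv (fun z' => H8 x y z' t) z = 0 ∧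
        deriv (fun t' => H8 x y z t') t = 0 := by
  refine ⟨fun x y z _ _ _ => by ring, ?_⟩
  rintro ⟨x, y, z, t, hH, -, -, -, hHt⟩
  simp only [H8_eq_one_sub_mul] at hH hHt
  exact one_sub_mul_ne_zero_of_deriv_eq_zero hHt hH
end

section
/- For the 3-dimensional step set with xyz·S = (z²+1)(x+y)(xy+1), the solution set in ℂ⁴ of the critical point system {H = 0, tH_t = xH_x, tH_t = yH_y, tH_t = zH_z}, where H = 1 − t(z²+1)(x+y)(xy+1), is exactly the set of points with z² = 1, y² = 1, x = y, and 8t = y; i.e., the four points (1,1,±1,1/8) and (−1,−1,±1,−1/8). -/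
/-!
Write `P = (z²+1)(x+y)(xy+1)`, so `H = 1 - tP` and `tH_t = -tP`. On `H = 0` we have `tP = 1`,
so `t`, `z²+1`, `x+y` and `xy+1` are all units. Dividing out `t(z²+1)`, the equations
`tH_t = xH_x` and `tH_t = yH_y` become `y(1-x²) = 0` and `x(1-y²) = 0`, and dividing out
`t(x+y)(xy+1)`, `tH_t = zH_z` becomes `z² = 1`. Since `x + y ≠ 0`, neither `x` nor `y` vanishes,
so `x² = y² = 1` and then `x = y`; finally `P = 8y` and `8ty = 1` give `8t = y`.
-/

section deriv

variable (x y z t : ℂ)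

lemma hasDerivAt_H8_t :
    HasDerivAt (fun t' => H8 x y z t') (-((z ^ 2 + 1) * (x + y) * (x * y + 1))) t :=
  ((((hasDerivAt_id' t).mul_const (z ^ 2 + 1)).mul_const (x + y)).mul_const
    (x * y + 1)).const_sub 1 |>.congr_deriv (by ring)

lemma hasDerivAt_H8_x :
    HasDerivAt (fun x' => H8 x' y z t) (-(t * (z ^ 2 + 1) * (y ^ 2 + 2 * x * y + 1))) x :=
  ((((hasDerivAt_id' x).add_const y).const_mul (t * (z ^ 2 + 1))).mul
    (((hasDerivAt_id' x).mul_const y).add_const 1)).const_sub 1 |>.congr_deriv (by ring)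

lemma hasDerivAt_H8_y :
    HasDerivAt (fun y' => H8 x y' z t) (-(t * (z ^ 2 + 1) * (x ^ 2 + 2 * x * y + 1))) y :=
  ((((hasDerivAt_id' y).const_add x).const_mul (t * (z ^ 2 + 1))).mul
    (((hasDerivAt_id' y).const_mul x).add_const 1)).const_sub 1 |>.congr_deriv (by ring)

lemma hasDerivAt_H8_z :
    HasDerivAt (fun z' => H8 x y z' t) (-(2 * t * z * (x + y) * (x * y + 1))) z :=
  (((((hasDerivAt_pow 2 z).add_const 1).const_mul t).mul_const (x + y)).mul_const
    (x * y + 1)).const_sub 1 |>.congr_deriv (by norm_num only; ring)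

end deriv

section field

variable {K : Type*} [Field K] {x y z t : K}

lemma critical_equations_iff (h : t * (z ^ 2 + 1) * (x + y) * (x * y + 1) = 1) :
    (t * -((z ^ 2 + 1) * (x + y) * (x * y + 1)) =
        x * -(t * (z ^ 2 + 1) * (y ^ 2 + 2 * x * y + 1)) ∧
      t * -((z ^ 2 + 1) * (x + y) * (x * y + 1)) =
        y * -(t * (z ^ 2 + 1) * (x ^ 2 + 2 * x * y + 1)) ∧
      t * -((z ^ 2 + 1) * (x + y) * (x * y + 1)) = z * -(2 * t * z * (x + y) * (x * y + 1))) ↔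
      (y * (1 - x ^ 2) = 0 ∧ x * (1 - y ^ 2) = 0 ∧ z ^ 2 = 1) := by
  have htz : t * (z ^ 2 + 1) ≠ 0 :=
    left_ne_zero_of_mul_eq_one (b := (x + y) * (x * y + 1)) (by linear_combination h)
  have htxy : t * (x + y) * (x * y + 1) ≠ 0 :=
    left_ne_zero_of_mul_eq_one (b := z ^ 2 + 1) (by linear_combination h)
  refine and_congr ⟨fun e => ?_, fun e => ?_⟩ (and_congr ⟨fun e => ?_, fun e => ?_⟩
    ⟨fun e => ?_, fun e => ?_⟩)
  · exact mul_left_cancel₀ htz (by linear_combination -e)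
  · linear_combination -t * (z ^ 2 + 1) * e
  · exact mul_left_cancel₀ htz (by linear_combination -e)
  · linear_combination -t * (z ^ 2 + 1) * e
  · exact sub_eq_zero.1 (mul_left_cancel₀ htxy (by linear_combination e))
  · linear_combination t * (x + y) * (x * y + 1) * e

lemma critical_polynomial_system_iff :
    (t * (z ^ 2 + 1) * (x + y) * (x * y + 1) = 1 ∧
      y * (1 - x ^ 2) = 0 ∧ x * (1 - y ^ 2) = 0 ∧ z ^ 2 = 1) ↔
      (z ^ 2 = 1 ∧ y ^ 2 = 1 ∧ x = y ∧ 8 * t = y) := by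
  constructor
  · rintro ⟨h, hx, hy, hz⟩
    have hsum : x + y ≠ 0 :=
      left_ne_zero_of_mul_eq_one (b := t * (z ^ 2 + 1) * (x * y + 1)) (by linear_combination h)
    have hx0 : x ≠ 0 := fun hx0 => hsum (by linear_combination hx + (1 + x * y) * hx0)
    have hy0 : y ≠ 0 := fun hy0 => hsum (by linear_combination hy + (1 + x * y) * hy0)
    have hx2 : x ^ 2 = 1 := by linear_combination -(mul_eq_zero.1 hx).resolve_left hy0
    have hy2 : y ^ 2 = 1 := by linear_combination -(mul_eq_zero.1 hy).resolve_left hx0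
    obtain rfl : x = y := mul_left_cancel₀ hsum (by linear_combination hx2 - hy2)
    exact ⟨hz, hy2, rfl, by
      linear_combination x * h - 2 * t * x ^ 2 * (x ^ 2 + 1) * hz - 4 * t * (x ^ 2 + 2) * hy2⟩
  · rintro ⟨hz, hy, rfl, ht⟩
    exact ⟨by linear_combination 2 * t * x * (x ^ 2 + 1) * hz + (4 * t * x + 1) * hy + x * ht,
      by linear_combination -x * hy, by linear_combination -x * hy, hz⟩

lemma sq_eq_one_system_iff_four_points [CharZero K] :
    (z ^ 2 = 1 ∧ y ^ 2 = 1 ∧ x = y ∧ 8 * t = y) ↔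
      ((x, y, z, t) = (1, 1, 1, 1 / 8) ∨ (x, y, z, t) = (1, 1, -1, 1 / 8) ∨
        (x, y, z, t) = (-1, -1, 1, -1 / 8) ∨ (x, y, z, t) = (-1, -1, -1, -1 / 8)) := by
  simp only [Prod.mk.injEq]
  constructor
  · rintro ⟨hz, hy, rfl, ht⟩
    obtain rfl : t = x / 8 := by linear_combination ht / 8
    rcases sq_eq_one_iff.1 hy with rfl | rfl <;> rcases sq_eq_one_iff.1 hz with rfl | rfl <;>
      norm_num
  · rintro (⟨rfl, rfl, rfl, rfl⟩ | ⟨rfl, rfl, rfl, rfl⟩ | ⟨rfl, rfl, rfl, rfl⟩ |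
      ⟨rfl, rfl, rfl, rfl⟩) <;> norm_num

end field

/-- The solution set in `ℂ⁴` of the critical point system
`{H = 0, tH_t = xH_x, tH_t = yH_y, tH_t = zH_z}` is exactly
`{z² = 1, y² = 1, x = y, 8t = y}`, i.e. the four points
`(1,1,±1,1/8)` and `(-1,-1,±1,-1/8)`. -/
theorem eight_step_critical_points (x y z t : ℂ) :
    ((H8 x y z t = 0 ∧
      t * deriv (fun t' => H8 x y z t') t = x * deriv (fun x' => H8 x' y z t) x ∧
      t * deriv (fun t' => H8 x y z t') t = y * deriv (fun y' => H8 x y' z t) y ∧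
      t * deriv (fun t' => H8 x y z t') t = z * deriv (fun z' => H8 x y z' t) z) ↔
      (z ^ 2 = 1 ∧ y ^ 2 = 1 ∧ x = y ∧ 8 * t = y)) ∧
    ((z ^ 2 = 1 ∧ y ^ 2 = 1 ∧ x = y ∧ 8 * t = y) ↔
      ((x, y, z, t) = (1, 1, 1, 1 / 8) ∨ (x, y, z, t) = (1, 1, -1, 1 / 8) ∨
        (x, y, z, t) = (-1, -1, 1, -1 / 8) ∨ (x, y, z, t) = (-1, -1, -1, -1 / 8))) := by
  refine ⟨?_, sq_eq_one_system_iff_four_points⟩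
  rw [(hasDerivAt_H8_t ..).deriv, (hasDerivAt_H8_x ..).deriv, (hasDerivAt_H8_y ..).deriv,
    (hasDerivAt_H8_z ..).deriv, H8, sub_eq_zero, eq_comm]
  exact (and_congr_right critical_equations_iff).trans critical_polynomial_system_iff
end
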